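/- arXiv:2002.06625 — 3 statements merged into one kernel-verified Lean document; each statement's English description precedes it below -/
import Mathlib

section
/- Let H be a vector space, K and K′ two commensurable subspaces, and D a subspace. If D ∩ K and H/(D + K) are finite-dimensional, then D ∩ K′ and H/(D + K′) are also finite-dimensional. -/
/-- Two subspaces `V, W` of a vector space are commensurable if both
`V/(V ∩ W)` and `W/(V ∩ W)` are finite-dimensional. -/
def Commensurable' {F H : Type*} [Field F] [AddCommGroup H] [Module F H]
    (V W : Submodule F H) : Prop :=
  FiniteDimensional F (V ⧸ (V ⊓ W).comap V.subtype) ∧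
    FiniteDimensional F (W ⧸ (V ⊓ W).comap W.subtype)

/-!
Write `B/A` for `B ⧸ A.comap B.subtype`, the image of `B` in `H/A`; commensurability says that
`K/K'` and `K'/K` are finite-dimensional. Intersecting with `D` can only shrink such a relative
quotient, since `(D ∩ K')/(D ∩ K)` embeds into `K'/K`, and adding `D` can only shrink it as well,
since `(D + K)/(D + K')` is a quotient of `K/K'`. So `D ∩ K'` is an extension of a
finite-dimensional space by a subspace of `D ∩ K`, and `H/(D + K')` is an extension of
`H/(D + K)` by a finite-dimensional space.
-/

namespace Submodule

section Ring

variable {R M : Type*} [Ring R] [AddCommGroup M] [Module R M] {A B : Submodule R M}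

theorem finite_quotient_of_finite_quotient_comap (hB : Module.Finite R (M ⧸ B))
    (hBA : Module.Finite R (B ⧸ A.comap B.subtype)) : Module.Finite R (M ⧸ A) := by
  have hker : LinearMap.ker (A.mkQ ∘ₗ B.subtype) = A.comap B.subtype := by
    rw [LinearMap.ker_comp, ker_mkQ]
  have hrange : LinearMap.range (A.mkQ ∘ₗ B.subtype) = B.map A.mkQ := by
    rw [LinearMap.range_comp, range_subtype]
  have : Module.Finite R (B.map A.mkQ) :=
    .equiv ((quotEquivOfEq _ _ hker.symm).trans (A.mkQ ∘ₗ B.subtype).quotKerEquivRange |>.trans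
      (LinearEquiv.ofEq _ _ hrange))
  have : Module.Finite R (M ⧸ (A ⊔ B)) := CoFG.of_le le_sup_right hB
  have : Module.Finite R ((M ⧸ A) ⧸ B.map A.mkQ) :=
    .equiv (quotientQuotientEquivQuotientSup A B).symm
  exact .of_submodule_quotient (B.map A.mkQ)

theorem finite_quotient_comap_sup_left (C : Submodule R M)
    (hBA : Module.Finite R (B ⧸ A.comap B.subtype)) :
    Module.Finite R (↥(C ⊔ B) ⧸ (C ⊔ A).comap (C ⊔ B).subtype) := by
  refine .of_surjective (mapQ (A.comap B.subtype) _ (inclusion le_sup_right)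
    fun _ hx ↦ mem_sup_right hx) ?_
  intro y
  obtain ⟨⟨x, hx⟩, rfl⟩ := Quotient.mk_surjective _ y
  obtain ⟨c, hc, b, hb, rfl⟩ := mem_sup.mp hx
  exact ⟨Quotient.mk ⟨b, hb⟩, (Quotient.eq _).mpr (by simp [mem_sup_left hc])⟩

end Ring

variable {R M : Type*} [Ring R] [IsNoetherianRing R] [AddCommGroup M] [Module R M]
  {A B : Submodule R M}

theorem finite_of_finite_quotient_comap (hA : Module.Finite R A)
    (hBA : Module.Finite R (B ⧸ A.comap B.subtype)) : Module.Finite R B := by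
  have : Module.Finite R (A.comap B.subtype) :=
    .of_injective (B.subtype.restrict fun _ hx ↦ hx) fun _ _ h ↦
      Subtype.ext <| Subtype.ext (Subtype.ext_iff.mp h :)
  exact .of_submodule_quotient (A.comap B.subtype)

theorem finite_quotient_comap_inf_left (C : Submodule R M)
    (hBA : Module.Finite R (B ⧸ A.comap B.subtype)) :
    Module.Finite R (↥(C ⊓ B) ⧸ (C ⊓ A).comap (C ⊓ B).subtype) := by
  refine .of_injective (mapQ _ (A.comap B.subtype) (inclusion inf_le_right)
    fun _ hx ↦ by simp only [mem_comap] at hx ⊢; exact hx.2) ?_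
  rw [← LinearMap.ker_eq_bot, ker_mapQ]
  convert mkQ_map_self ((C ⊓ A).comap (C ⊓ B).subtype) using 2
  ext x
  simp [(mem_inf.mp x.2).1]

end Submodule

open Submodule

theorem commensurable'_iff {F H : Type*} [Field F] [AddCommGroup H] [Module F H]
    {V W : Submodule F H} :
    Commensurable' V W ↔ FiniteDimensional F (V ⧸ W.comap V.subtype) ∧
      FiniteDimensional F (W ⧸ V.comap W.subtype) := by
  rw [Commensurable', comap_inf, comap_inf, comap_subtype_self, comap_subtype_self, top_inf_eq,
    inf_top_eq]

/-- If `K` and `K′` are commensurable subspaces of `H` and `D` is a subspace such that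
`D ∩ K` and `H/(D + K)` are finite-dimensional, then `D ∩ K′` and `H/(D + K′)` are
also finite-dimensional. -/
theorem fredholm_data_indep_of_commensurable
    {F H : Type*} [Field F] [AddCommGroup H] [Module F H]
    (D K K' : Submodule F H) (hKK' : Commensurable' K K')
    (h1 : FiniteDimensional F ↥(D ⊓ K)) (h2 : FiniteDimensional F (H ⧸ (D ⊔ K))) :
    FiniteDimensional F ↥(D ⊓ K') ∧ FiniteDimensional F (H ⧸ (D ⊔ K')) := by
  obtain ⟨hK, hK'⟩ := commensurable'_iff.mp hKK'
  exact ⟨finite_of_finite_quotient_comap h1 (finite_quotient_comap_inf_left D hK'),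
    finite_quotient_of_finite_quotient_comap h2 (finite_quotient_comap_sup_left D hK)⟩
end

section
/- A subspace D of a vector space H is a complement of some subspace commensurable with H⁺ if and only if for every subspace K commensurable with H⁺, both D ∩ K and H/(D + K) are finite-dimensional. -/
theorem exists_isCompl_le_sup_of_isCompl_sup {α : Type*} [Lattice α] [BoundedOrder α]
    [IsModularLattice α] [ComplementedLattice α] {D P W : α} (hW : IsCompl (D ⊔ P) W) :
    ∃ K, IsCompl D K ∧ K ≤ P ⊔ W ∧ P ≤ K ⊔ D ⊓ P := by
  obtain ⟨C, hC⟩ := exists_isCompl (D ⊓ P)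
  have hP : P ≤ D ⊓ P ⊔ C ⊓ P := by
    rw [← sup_inf_assoc_of_le C inf_le_right, hC.sup_eq_top, top_inf_eq]
  refine ⟨C ⊓ P ⊔ W, ⟨?_, ?_⟩, sup_le_sup_right inf_le_right W, ?_⟩
  · refine Disjoint.disjoint_sup_right_of_disjoint_sup_left ?_ ?_
    · rw [disjoint_iff, inf_comm C, ← inf_assoc, hC.inf_eq_bot]
    · exact hW.disjoint.mono_left (sup_le_sup_left inf_le_right D)
  · rw [codisjoint_iff, eq_top_iff, ← hW.sup_eq_top, ← sup_assoc]
    refine sup_le_sup_right (sup_le le_sup_left (hP.trans ?_)) W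
    exact sup_le_sup_right inf_le_left _
  · exact hP.trans (sup_le le_sup_right (le_sup_left.trans le_sup_left))

namespace Submodule

variable {F H : Type*} [Field F] [AddCommGroup H] [Module F H]

def AlmostLE (V W : Submodule F H) : Prop :=
  ∃ A : Submodule F H, FiniteDimensional F A ∧ V ≤ W ⊔ A

theorem AlmostLE.of_le {V W : Submodule F H} (h : V ≤ W) : V.AlmostLE W :=
  ⟨⊥, inferInstance, h.trans le_sup_left⟩

theorem AlmostLE.trans {U V W : Submodule F H} (hUV : U.AlmostLE V) (hVW : V.AlmostLE W) :
    U.AlmostLE W := by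
  obtain ⟨A, hA, hU⟩ := hUV
  obtain ⟨B, hB, hV⟩ := hVW
  refine ⟨B ⊔ A, inferInstance, hU.trans ?_⟩
  rw [← sup_assoc]
  exact sup_le_sup_right hV A

theorem finiteDimensional_quotient_comap_subtype_of_le_sup {V W A : Submodule F H}
    [FiniteDimensional F A] (h : V ≤ W ⊔ A) :
    FiniteDimensional F (V ⧸ W.comap V.subtype) := by
  set f := W.mkQ ∘ₗ V.subtype
  have hker : LinearMap.ker f = W.comap V.subtype := by
    rw [LinearMap.ker_comp, ker_mkQ]
  have hrange : LinearMap.range f ≤ A.map W.mkQ := by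
    rw [LinearMap.range_comp, range_subtype]
    calc V.map W.mkQ ≤ (W ⊔ A).map W.mkQ := map_mono h
      _ = A.map W.mkQ := by rw [map_sup, mkQ_map_self, bot_sup_eq]
  have : FiniteDimensional F (LinearMap.range f) := finiteDimensional_of_le hrange
  exact ((quotEquivOfEq _ _ hker.symm).trans f.quotKerEquivRange).symm.finiteDimensional

theorem almostLE_of_finiteDimensional_quotient_comap_subtype {V W : Submodule F H}
    (h : FiniteDimensional F (V ⧸ W.comap V.subtype)) : V.AlmostLE W := by
  obtain ⟨q, hq⟩ := (W.comap V.subtype).exists_isCompl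
  have : FiniteDimensional F q := (quotientEquivOfIsCompl _ q hq).finiteDimensional
  refine ⟨q.map V.subtype, inferInstance, fun v hv => ?_⟩
  obtain ⟨a, ha, b, hb, hab⟩ := mem_sup.mp (hq.sup_eq_top ▸ mem_top : (⟨v, hv⟩ : V) ∈ _ ⊔ q)
  exact mem_sup.mpr ⟨a, ha, b, mem_map_of_mem hb, congrArg Subtype.val hab⟩

theorem almostLE_iff_finiteDimensional_quotient (V W : Submodule F H) :
    V.AlmostLE W ↔ FiniteDimensional F (V ⧸ W.comap V.subtype) :=
  ⟨fun ⟨_, _, h⟩ => finiteDimensional_quotient_comap_subtype_of_le_sup h,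
    almostLE_of_finiteDimensional_quotient_comap_subtype⟩

theorem commensurable'_iff_almostLE (V W : Submodule F H) :
    Commensurable' V W ↔ V.AlmostLE W ∧ W.AlmostLE V := by
  rw [almostLE_iff_finiteDimensional_quotient, almostLE_iff_finiteDimensional_quotient,
    Commensurable', comap_inf, comap_inf, comap_subtype_self, comap_subtype_self, top_inf_eq,
    inf_top_eq]

theorem finiteDimensional_of_almostLE_of_disjoint {X W : Submodule F H} (h : X.AlmostLE W)
    (hXW : Disjoint X W) : FiniteDimensional F X := by
  rw [almostLE_iff_finiteDimensional_quotient, disjoint_iff_comap_eq_bot.mp hXW] at h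
  exact (quotEquivOfEqBot ⊥ rfl).finiteDimensional

theorem finiteDimensional_quotient_of_top_almostLE {W : Submodule F H}
    (h : (⊤ : Submodule F H).AlmostLE W) :
    FiniteDimensional F (H ⧸ W) := by
  obtain ⟨A, hA, hle⟩ := h
  refine FiniteDimensional.of_surjective (W.mkQ ∘ₗ A.subtype) fun x => ?_
  obtain ⟨x, rfl⟩ := W.mkQ_surjective x
  obtain ⟨w, hw, a, ha, rfl⟩ := mem_sup.mp (hle (mem_top (x := x)))
  exact ⟨⟨a, ha⟩, (Quotient.eq _).mpr (by simpa using W.neg_mem hw)⟩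

end Submodule

open Submodule in
/-- Fix a subspace `H⁺` of `H`; call `K` *compact* if it is commensurable with `H⁺`,
and `D` *discrete* if it has a compact complement.  A subspace `D` is discrete if and
only if for every compact subspace `K` both `D ∩ K` and `H/(D + K)` are
finite-dimensional. -/
theorem discrete_iff_fredholm
    {F H : Type*} [Field F] [AddCommGroup H] [Module F H]
    (Hp D : Submodule F H) :
    (∃ K : Submodule F H, Commensurable' K Hp ∧ IsCompl D K) ↔
      (∀ K : Submodule F H, Commensurable' K Hp →
        FiniteDimensional F ↥(D ⊓ K) ∧ FiniteDimensional F (H ⧸ (D ⊔ K))) := by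
  simp only [commensurable'_iff_almostLE]
  constructor
  · rintro ⟨K₀, ⟨hK₀Hp, hHpK₀⟩, hDK₀⟩ K ⟨hKHp, hHpK⟩
    have hKK₀ : K.AlmostLE K₀ := hKHp.trans hHpK₀
    obtain ⟨A, hA, hK₀K⟩ := hK₀Hp.trans hHpK
    have hDKK₀ : (D ⊓ K).AlmostLE K₀ := (AlmostLE.of_le inf_le_right).trans hKK₀
    refine ⟨finiteDimensional_of_almostLE_of_disjoint hDKK₀ ?_, ?_⟩
    · exact hDK₀.disjoint.mono_left inf_le_left
    · refine finiteDimensional_quotient_of_top_almostLE ⟨A, hA, ?_⟩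
      rw [← hDK₀.sup_eq_top, sup_assoc]
      exact sup_le_sup_left hK₀K D
  · intro hyp
    obtain ⟨hDHp, hQ⟩ := hyp Hp ⟨AlmostLE.of_le le_rfl, AlmostLE.of_le le_rfl⟩
    obtain ⟨W, hW⟩ := (D ⊔ Hp).exists_isCompl
    have : FiniteDimensional F W := (quotientEquivOfIsCompl _ W hW).finiteDimensional
    obtain ⟨K, hDK, hKle, hHple⟩ := exists_isCompl_le_sup_of_isCompl_sup hW
    exact ⟨K, ⟨⟨W, inferInstance, hKle⟩, ⟨D ⊓ Hp, hDHp, hHple⟩⟩, hDK⟩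
end

section
/- For the representation ϱ_j of the Witt algebra on j-differentials, given by ϱ_j(f∂)(g) = f g′ + j f′ g on ℂ[z,z⁻¹], the pullback of the Japanese cocycle satisfies ϱ_j*(η)(L_m, L_{−m}) = (6j² − 6j + 1) · ϱ_1*(η)(L_m, L_{−m}) for all integers m, where L_n = z^{−n+1}∂. -/
/-!
Each `ϱ_j(L_m)` is a weighted shift `zᵏ ↦ (k + j(1-m)) z^(k-m)`. For two weighted shifts by `m`
and `-m` only the finitely many `zᵏ` with `-m ≤ k < 0` cross from `H⁻` to `H⁺` and back, so `η` is
a finite sum of products of weights. Summing the quadratic in closed form gives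
`η(ϱ_j L_m, ϱ_j L_{-m}) = (6j² - 6j + 1)(m - m³)/6`, and the factor `6j² - 6j + 1` is all that
depends on `j`.
-/

/-- `ℂ[z,z⁻¹]`, with basis `zᵏ` indexed by `k : ℤ`. -/
abbrev LModel := ℤ →₀ ℂ

/-- The representation `ϱ_j` of the Witt algebra on `j`-differentials,
`ϱ_j(L_m) : zᵏ ↦ (k + j(1-m))·z^(k-m)`, coming from `ϱ_j(f∂)(g) = f g′ + j f′ g`
with `L_m = z^{-m+1}∂`. -/
noncomputable def rhoW (j m : ℤ) : Module.End ℂ LModel :=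
  Finsupp.lsum ℂ fun k : ℤ => ((k : ℂ) + (j : ℂ) * (1 - (m : ℂ))) • Finsupp.lsingle (k - m)

/-- Projection of `H = ℂ[z,z⁻¹]` onto `H⁻ = z⁻¹ℂ[z⁻¹]`. -/
noncomputable def projNeg : Module.End ℂ LModel :=
  Finsupp.lsum ℂ fun k : ℤ => if k < 0 then Finsupp.lsingle k else 0

/-- Projection of `H = ℂ[z,z⁻¹]` onto `H⁺ = ℂ[z]`. -/
noncomputable def projPos : Module.End ℂ LModel :=
  Finsupp.lsum ℂ fun k : ℤ => if 0 ≤ k then Finsupp.lsingle k else 0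

/-- Trace of an operator with finitely supported diagonal, as the (finite) sum of its
diagonal matrix entries in the basis `zᵏ`. -/
noncomputable def diagTrace (T : Module.End ℂ LModel) : ℂ :=
  ∑ᶠ k : ℤ, T (Finsupp.single k 1) k

/-- The Japanese cocycle `η(F,G) = tr(F^{−+}G^{+−} − G^{−+}F^{+−})` with respect to the
decomposition `H = H⁻ ⊕ H⁺` (the off-diagonal blocks are finite rank). -/
noncomputable def etaC (F G : Module.End ℂ LModel) : ℂ :=
  diagTrace (projNeg ∘ₗ F ∘ₗ projPos ∘ₗ G ∘ₗ projNeg) -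
    diagTrace (projNeg ∘ₗ G ∘ₗ projPos ∘ₗ F ∘ₗ projNeg)

noncomputable def weightedShift (w : ℤ → ℂ) (s : ℤ) : Module.End ℂ LModel :=
  Finsupp.lsum ℂ fun k : ℤ => w k • Finsupp.lsingle (k - s)

lemma rhoW_eq_weightedShift (j m : ℤ) :
    rhoW j m = weightedShift (fun k => (k : ℂ) + j * (1 - m)) m :=
  rfl

lemma weightedShift_single (w : ℤ → ℂ) (s k : ℤ) (c : ℂ) :
    weightedShift w s (Finsupp.single k c) = Finsupp.single (k - s) (w k * c) := by
  simp [weightedShift, mul_comm]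

lemma projNeg_single (k : ℤ) (c : ℂ) :
    projNeg (Finsupp.single k c) = if k < 0 then Finsupp.single k c else 0 := by
  rw [projNeg, Finsupp.lsum_single]
  split_ifs <;> simp

lemma projPos_single (k : ℤ) (c : ℂ) :
    projPos (Finsupp.single k c) = if 0 ≤ k then Finsupp.single k c else 0 := by
  rw [projPos, Finsupp.lsum_single]
  split_ifs <;> simp

lemma diag_projNeg_weightedShift_projPos_weightedShift_projNeg (a b : ℤ → ℂ) (s k : ℤ) :
    (projNeg ∘ₗ weightedShift a s ∘ₗ projPos ∘ₗ weightedShift b (-s) ∘ₗ projNeg)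
        (Finsupp.single k 1) k =
      if k < 0 ∧ 0 ≤ k + s then a (k + s) * b k else 0 := by
  simp only [LinearMap.comp_apply, projNeg_single]
  by_cases hk : k < 0
  · simp only [if_pos hk, weightedShift_single, projPos_single, sub_neg_eq_add, mul_one]
    by_cases hks : 0 ≤ k + s
    · simp only [if_pos hks, weightedShift_single, add_sub_cancel_right, projNeg_single,
        if_pos hk, if_pos (And.intro hk hks), Finsupp.single_eq_same]
    · simp [hks]
  · simp [hk]

lemma diagTrace_projNeg_weightedShift_projPos_weightedShift_projNeg (a b : ℤ → ℂ) (s : ℤ) :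
    diagTrace (projNeg ∘ₗ weightedShift a s ∘ₗ projPos ∘ₗ weightedShift b (-s) ∘ₗ projNeg) =
      ∑ i ∈ Finset.range s.toNat, a i * b (i - s) := by
  let e : ℕ ↪ ℤ := ⟨fun i => i - s, fun i i' h => by simpa using h⟩
  have hsupp : Function.support (fun k : ℤ =>
      (projNeg ∘ₗ weightedShift a s ∘ₗ projPos ∘ₗ weightedShift b (-s) ∘ₗ projNeg)
        (Finsupp.single k 1) k) ⊆ (Finset.range s.toNat).map e := by
    intro k hk
    simp only [Function.mem_support, diag_projNeg_weightedShift_projPos_weightedShift_projNeg,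
      ne_eq, ite_eq_right_iff, not_forall] at hk
    obtain ⟨⟨hk, hks⟩, -⟩ := hk
    simp only [Finset.coe_map, Set.mem_image, Finset.mem_coe, Finset.mem_range]
    exact ⟨(k + s).toNat, by omega, show ((k + s).toNat : ℤ) - s = k by omega⟩
  rw [diagTrace, finsum_eq_sum_of_support_subset _ hsupp, Finset.sum_map]
  refine Finset.sum_congr rfl fun i hi => ?_
  rw [Finset.mem_range] at hi
  change (projNeg ∘ₗ weightedShift a s ∘ₗ projPos ∘ₗ weightedShift b (-s) ∘ₗ projNeg)
    (Finsupp.single ((i : ℤ) - s) 1) ((i : ℤ) - s) = _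
  rw [diag_projNeg_weightedShift_projPos_weightedShift_projNeg, if_pos (by omega),
    sub_add_cancel]

lemma etaC_weightedShift (a b : ℤ → ℂ) (s : ℤ) :
    etaC (weightedShift a s) (weightedShift b (-s)) =
      ∑ i ∈ Finset.range s.toNat, a i * b (i - s) -
        ∑ i ∈ Finset.range (-s).toNat, b i * a (i + s) := by
  have h := diagTrace_projNeg_weightedShift_projPos_weightedShift_projNeg b a (-s)
  rw [neg_neg] at h
  simp only [sub_neg_eq_add] at h
  rw [etaC, diagTrace_projNeg_weightedShift_projPos_weightedShift_projNeg, h]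

lemma sum_range_add_mul_add {K : Type*} [Field K] [CharZero K] (a b : K) (n : ℕ) :
    ∑ i ∈ Finset.range n, ((i : K) + a) * (i + b) =
      n * (n - 1) * (2 * n - 1) / 6 + (a + b) * n * (n - 1) / 2 + n * a * b := by
  induction n with
  | zero => simp
  | succ n ih => rw [Finset.sum_range_succ, ih]; push_cast; ring

lemma sum_range_rhoW_weights (j : ℂ) (n : ℕ) :
    ∑ i ∈ Finset.range n, ((i : ℂ) + j * (1 - n)) * (i - n + j * (1 + n)) =
      (6 * j ^ 2 - 6 * j + 1) * (n - n ^ 3) / 6 := calc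
  _ = ∑ i ∈ Finset.range n, ((i : ℂ) + j * (1 - n)) * (i + (j * (1 + n) - n)) :=
    Finset.sum_congr rfl fun _ _ => by ring
  _ = _ := by rw [sum_range_add_mul_add]; ring

lemma etaC_rhoW (j m : ℤ) :
    etaC (rhoW j m) (rhoW j (-m)) = (6 * (j : ℂ) ^ 2 - 6 * j + 1) * (m - m ^ 3) / 6 := by
  rw [rhoW_eq_weightedShift, rhoW_eq_weightedShift, etaC_weightedShift]
  obtain ⟨n, rfl | rfl⟩ := Int.eq_nat_or_neg m
  · simp only [Int.toNat_natCast, Int.toNat_neg_natCast, Finset.range_zero, Finset.sum_empty]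
    push_cast
    simp only [sub_neg_eq_add, sub_zero]
    exact sum_range_rhoW_weights j n
  · simp only [Int.toNat_natCast, Int.toNat_neg_natCast, neg_neg, Finset.range_zero,
      Finset.sum_empty]
    push_cast
    simp only [sub_neg_eq_add, ← sub_eq_add_neg, zero_sub]
    rw [sum_range_rhoW_weights j n]
    ring

/-- The pullback of the Japanese cocycle along `ϱ_j` satisfies
`ϱ_j*(η)(L_m, L_{−m}) = (6j² − 6j + 1)·ϱ_1*(η)(L_m, L_{−m})` for all `m`. -/
theorem rho_pullback_cocycle (j m : ℤ) :
    etaC (rhoW j m) (rhoW j (-m)) =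
      (6 * (j : ℂ) ^ 2 - 6 * (j : ℂ) + 1) * etaC (rhoW 1 m) (rhoW 1 (-m)) := by
  rw [etaC_rhoW, etaC_rhoW]
  push_cast
  ring
end
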